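/- Let a > b > 0 and Z_i^n be as in the Jackson stationary distribution (Z_i^n ∼ Geometric on ℕ_0 with success probability 1 − ρ_i^{(n)} where ρ_i^{(n)} = (1 − a n^{−3/2})^{n−i+1} for 2 ≤ i ≤ n, independent). Then E[Σ_{i=2}^n Z_i^n] / (n^{3/2} a^{−1} log n) → 1 as n → ∞. -/

import Mathlib

/-!
A variable with tails `P(Z ≥ m) = ρ^m` has mean `ρ / (1 - ρ)`, so with `q = 1 - a n^{-3/2}` the
expected imbalance is `S = ∑_{k=1}^{n-1} q^k / (1 - q^k)`. The bounds
`k q^k (1 - q) ≤ 1 - q^k ≤ k (1 - q)` squeeze `(1 - q) S` between `q^n H_{n-1}` and `H_{n-1}`.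
Since `n (1 - q) = a n^{-1/2} → 0`, Bernoulli's inequality gives `q^n → 1`, and `H_{n-1} ~ log n`;
finally `n^{3/2} a⁻¹ = (1 - q)⁻¹`.
-/

open Filter Finset MeasureTheory Topology
open scoped ENNReal

section TailSum

variable {Ω : Type*} [MeasurableSpace Ω] (μ : Measure Ω) {f : Ω → ℕ}

theorem natCast_eq_tsum_ite_lt (k : ℕ) :
    (k : ℝ≥0∞) = ∑' m : ℕ, if m < k then 1 else 0 := by
  rw [tsum_eq_sum (s := range k) fun m hm => if_neg (by simpa using hm), sum_congr rfl fun m hm => if_pos (mem_range.1 hm)]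
  simp

theorem lintegral_natCast_eq_tsum_measure (hf : Measurable f) :
    ∫⁻ ω, (f ω : ℝ≥0∞) ∂μ = ∑' m : ℕ, μ {ω | m + 1 ≤ f ω} := by
  have hset : ∀ m : ℕ, MeasurableSet {ω | m + 1 ≤ f ω} := fun m => hf measurableSet_Ici
  calc ∫⁻ ω, (f ω : ℝ≥0∞) ∂μ
      = ∫⁻ ω, ∑' m : ℕ, {ω | m + 1 ≤ f ω}.indicator 1 ω ∂μ := by
        congr! with ω
        rw [natCast_eq_tsum_ite_lt]
        simp [Set.indicator_apply]
    _ = ∑' m : ℕ, μ {ω | m + 1 ≤ f ω} := by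
        rw [lintegral_tsum fun m => (measurable_one.indicator (hset m)).aemeasurable]
        exact tsum_congr fun m => lintegral_indicator_one (hset m)

variable {ρ : ℝ}

theorem lintegral_natCast_of_measure_le_eq_pow (hf : Measurable f) (hρ0 : 0 ≤ ρ) (hρ1 : ρ < 1)
    (htail : ∀ m : ℕ, μ {ω | m ≤ f ω} = ENNReal.ofReal (ρ ^ m)) :
    ∫⁻ ω, (f ω : ℝ≥0∞) ∂μ = ENNReal.ofReal (ρ / (1 - ρ)) := by
  have hsum : HasSum (fun m : ℕ => ρ ^ (m + 1)) (ρ / (1 - ρ)) := by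
    simpa [pow_succ', div_eq_mul_inv] using (hasSum_geometric_of_lt_one hρ0 hρ1).mul_left ρ
  rw [lintegral_natCast_eq_tsum_measure μ hf]
  simp_rw [htail]
  rw [← ENNReal.ofReal_tsum_of_nonneg (fun m => pow_nonneg hρ0 _) hsum.summable, hsum.tsum_eq]

theorem integrable_natCast_of_measure_le_eq_pow (hf : Measurable f) (hρ0 : 0 ≤ ρ) (hρ1 : ρ < 1)
    (htail : ∀ m : ℕ, μ {ω | m ≤ f ω} = ENNReal.ofReal (ρ ^ m)) :
    Integrable (fun ω => (f ω : ℝ)) μ := by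
  simpa using integrable_toReal_of_lintegral_ne_top (f := fun ω => (f ω : ℝ≥0∞))
    (measurable_from_top.comp hf).aemeasurable
    (by rw [lintegral_natCast_of_measure_le_eq_pow μ hf hρ0 hρ1 htail]; exact ENNReal.ofReal_ne_top)

theorem integral_natCast_of_measure_le_eq_pow (hf : Measurable f) (hρ0 : 0 ≤ ρ) (hρ1 : ρ < 1)
    (htail : ∀ m : ℕ, μ {ω | m ≤ f ω} = ENNReal.ofReal (ρ ^ m)) :
    ∫ ω, (f ω : ℝ) ∂μ = ρ / (1 - ρ) := by
  have := integral_toReal (μ := μ) (measurable_from_top.comp hf).aemeasurable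
    (ae_of_all _ fun ω => ENNReal.natCast_lt_top (f ω))
  simp only [Function.comp_apply, ENNReal.toReal_natCast] at this
  rw [this, lintegral_natCast_of_measure_le_eq_pow μ hf hρ0 hρ1 htail,
    ENNReal.toReal_ofReal (div_nonneg hρ0 (by linarith))]

theorem integral_sum_natCast_of_measure_le_eq_pow {ι : Type*} (s : Finset ι) {f : ι → Ω → ℕ}
    {ρ : ι → ℝ} (hf : ∀ i ∈ s, Measurable (f i)) (hρ0 : ∀ i ∈ s, 0 ≤ ρ i) (hρ1 : ∀ i ∈ s, ρ i < 1)
    (htail : ∀ i ∈ s, ∀ m : ℕ, μ {ω | m ≤ f i ω} = ENNReal.ofReal (ρ i ^ m)) :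
    ∫ ω, ∑ i ∈ s, (f i ω : ℝ) ∂μ = ∑ i ∈ s, ρ i / (1 - ρ i) := by
  rw [integral_finsetSum _ fun i hi => integrable_natCast_of_measure_le_eq_pow μ (hf i hi)
    (hρ0 i hi) (hρ1 i hi) (htail i hi)]
  exact sum_congr rfl fun i hi =>
    integral_natCast_of_measure_le_eq_pow μ (hf i hi) (hρ0 i hi) (hρ1 i hi) (htail i hi)

end TailSum

section GeometricMeans

variable {q : ℝ}

theorem one_sub_pow_le_mul_one_sub (hq : -1 ≤ q) (k : ℕ) : 1 - q ^ k ≤ k * (1 - q) := by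
  linarith [one_add_mul_sub_le_pow hq k]

theorem mul_pow_mul_one_sub_le_one_sub_pow (hq0 : 0 ≤ q) (hq1 : q ≤ 1) (k : ℕ) :
    k * q ^ k * (1 - q) ≤ 1 - q ^ k := by
  rw [← geom_sum_mul_neg]
  gcongr
  simpa using card_nsmul_le_sum (range k) (q ^ ·) (q ^ k)
    fun j hj => pow_le_pow_of_le_one hq0 hq1 (mem_range.1 hj).le

theorem one_sub_mul_pow_div_one_sub_pow_le (hq0 : 0 < q) (hq1 : q < 1) {k : ℕ} (hk : 0 < k) :
    (1 - q) * (q ^ k / (1 - q ^ k)) ≤ (k : ℝ)⁻¹ := by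
  have hpos : 0 < 1 - q ^ k := sub_pos.2 (pow_lt_one₀ hq0.le hq1 hk.ne')
  rw [← mul_div_assoc, div_le_iff₀ hpos, inv_mul_eq_div, le_div_iff₀ (by positivity)]
  linarith [mul_pow_mul_one_sub_le_one_sub_pow hq0.le hq1.le k]

theorem pow_div_le_one_sub_mul_pow_div_one_sub_pow (hq0 : 0 < q) (hq1 : q < 1) {k : ℕ}
    (hk : 0 < k) :
    q ^ k / k ≤ (1 - q) * (q ^ k / (1 - q ^ k)) := by
  have hpos : 0 < 1 - q ^ k := sub_pos.2 (pow_lt_one₀ hq0.le hq1 hk.ne')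
  rw [← mul_div_assoc, le_div_iff₀ hpos, div_mul_eq_mul_div, div_le_iff₀ (by positivity)]
  have := one_sub_pow_le_mul_one_sub (by linarith : -1 ≤ q) k
  nlinarith [pow_pos hq0 k]

theorem pow_mul_harmonic_le_one_sub_mul_sum (hq0 : 0 < q) (hq1 : q < 1) (m : ℕ) :
    q ^ m * harmonic m ≤ (1 - q) * ∑ k ∈ Icc 1 m, q ^ k / (1 - q ^ k) := by
  rw [harmonic_eq_sum_Icc]
  push_cast
  rw [mul_sum, mul_sum]
  refine sum_le_sum fun k hk => ?_
  obtain ⟨hk1, hkm⟩ := mem_Icc.1 hk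
  calc q ^ m * (k : ℝ)⁻¹ ≤ q ^ k / k :=
        mul_le_mul_of_nonneg_right (pow_le_pow_of_le_one hq0.le hq1.le hkm) (by positivity)
    _ ≤ _ := pow_div_le_one_sub_mul_pow_div_one_sub_pow hq0 hq1 hk1

theorem one_sub_mul_sum_le_harmonic (hq0 : 0 < q) (hq1 : q < 1) (m : ℕ) :
    (1 - q) * ∑ k ∈ Icc 1 m, q ^ k / (1 - q ^ k) ≤ harmonic m := by
  rw [harmonic_eq_sum_Icc, mul_sum]
  push_cast
  gcongr with k hk
  exact one_sub_mul_pow_div_one_sub_pow_le hq0 hq1 (mem_Icc.1 hk).1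

end GeometricMeans

theorem sum_Icc_two_sub_add_one {M : Type*} [AddCommMonoid M] (f : ℕ → M) (n : ℕ) :
    ∑ i ∈ Icc 2 n, f (n - i + 1) = ∑ k ∈ Icc 1 (n - 1), f k := by
  refine sum_nbij' (fun i => n - i + 1) (fun k => n - k + 1) ?_ ?_ ?_ ?_ fun _ _ => rfl <;>
    intro i hi <;> simp only [mem_Icc] at hi ⊢ <;> omega

theorem tendsto_harmonic_pred_div_log :
    Tendsto (fun n : ℕ => (harmonic (n - 1) : ℝ) / Real.log n) atTop (𝓝 1) := by
  have hinv : Tendsto (fun n : ℕ => 1 + (Real.log n)⁻¹) atTop (𝓝 1) := by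
    simpa using tendsto_const_nhds.add
      (Real.tendsto_log_atTop.comp tendsto_natCast_atTop_atTop).inv_tendsto_atTop
  refine tendsto_of_tendsto_of_tendsto_of_le_of_le' tendsto_const_nhds hinv ?_ ?_
  all_goals
    filter_upwards [eventually_ge_atTop 2] with n hn
    have hlog : 0 < Real.log n := Real.log_pos (by exact_mod_cast hn)
  · have := log_add_one_le_harmonic (n - 1)
    rw [Nat.sub_add_cancel (by omega : 1 ≤ n)] at this
    rwa [le_div_iff₀ hlog, one_mul]
  · have := harmonic_le_one_add_log (n - 1)
    have hmono : Real.log (n - 1 : ℕ) ≤ Real.log n :=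
      Real.log_le_log (Nat.cast_pos.2 (by omega)) (by exact_mod_cast Nat.sub_le n 1)
    rw [div_le_iff₀ hlog, add_mul, inv_mul_cancel₀ hlog.ne']
    linarith

theorem tendsto_pow_self_of_tendsto_mul_one_sub {q : ℕ → ℝ}
    (hq : ∀ᶠ n in atTop, 0 ≤ q n ∧ q n ≤ 1)
    (h : Tendsto (fun n => n * (1 - q n)) atTop (𝓝 0)) :
    Tendsto (fun n => q n ^ n) atTop (𝓝 1) := by
  refine tendsto_of_tendsto_of_tendsto_of_le_of_le' (by simpa using tendsto_const_nhds.sub h)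
    tendsto_const_nhds ?_ ?_
  all_goals filter_upwards [hq] with n hn
  · linarith [one_add_mul_sub_le_pow (by linarith : -1 ≤ q n) n]
  · exact pow_le_one₀ hn.1 hn.2

theorem tendsto_natCast_mul_div_rpow_three_halves (a : ℝ) :
    Tendsto (fun n : ℕ => n * (a / (n : ℝ) ^ ((3 : ℝ) / 2))) atTop (𝓝 0) := by
  have h := ((tendsto_rpow_neg_atTop (by norm_num : (0 : ℝ) < 1 / 2)).comp
    tendsto_natCast_atTop_atTop).const_mul a
  rw [mul_zero] at h
  refine h.congr' ?_
  filter_upwards [eventually_gt_atTop 0] with n hn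
  have hn : (0 : ℝ) < n := by exact_mod_cast hn
  rw [Function.comp_apply, Real.rpow_neg hn.le, show (3 : ℝ) / 2 = 1 + 1 / 2 by norm_num,
    Real.rpow_add hn, Real.rpow_one]
  field_simp

theorem tendsto_one_sub_mul_sum_div_harmonic {q : ℕ → ℝ}
    (hq : ∀ᶠ n in atTop, 0 < q n ∧ q n < 1)
    (h : Tendsto (fun n => n * (1 - q n)) atTop (𝓝 0)) :
    Tendsto (fun n => (1 - q n) * (∑ k ∈ Icc 1 (n - 1), q n ^ k / (1 - q n ^ k))
      / harmonic (n - 1)) atTop (𝓝 1) := by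
  refine tendsto_of_tendsto_of_tendsto_of_le_of_le'
    (tendsto_pow_self_of_tendsto_mul_one_sub (hq.mono fun n hn => ⟨hn.1.le, hn.2.le⟩) h)
    tendsto_const_nhds ?_ ?_
  all_goals
    filter_upwards [hq, eventually_ge_atTop 2] with n ⟨hq0, hq1⟩ hn
    have hH : (0 : ℝ) < harmonic (n - 1) := by exact_mod_cast harmonic_pos (by omega)
  · rw [le_div_iff₀ hH]
    calc q n ^ n * harmonic (n - 1) ≤ q n ^ (n - 1) * harmonic (n - 1) :=
          mul_le_mul_of_nonneg_right (pow_le_pow_of_le_one hq0.le hq1.le (Nat.sub_le n 1)) hH.le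
      _ ≤ _ := pow_mul_harmonic_le_one_sub_mul_sum hq0 hq1 (n - 1)
  · rw [div_le_one hH]
    exact one_sub_mul_sum_le_harmonic hq0 hq1 (n - 1)

theorem expected_imbalance_asymptotics
    (a b : ℝ) (hb : 0 < b) (hab : b < a)
    {Ω : Type*} [MeasurableSpace Ω] (μ : Measure Ω)
    (Z : ℕ → ℕ → Ω → ℕ)
    (hmeas : ∀ n i, Measurable (Z n i))
    (htail : ∀ n, 1 ≤ n → ∀ i, 2 ≤ i → i ≤ n → ∀ m : ℕ,
      μ {ω | m ≤ Z n i ω}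
        = ENNReal.ofReal (((1 - a / (n : ℝ) ^ ((3 : ℝ) / 2)) ^ (n - i + 1)) ^ m)) :
    Tendsto
      (fun n : ℕ =>
        (∫ ω, ∑ i ∈ Icc 2 n, (Z n i ω : ℝ) ∂μ)
          / ((n : ℝ) ^ ((3 : ℝ) / 2) * a⁻¹ * Real.log n))
      atTop (nhds 1) := by
  have ha : 0 < a := hb.trans hab
  set q : ℕ → ℝ := fun n => 1 - a / (n : ℝ) ^ ((3 : ℝ) / 2) with hq_def
  have hq : ∀ᶠ n in atTop, 0 < q n ∧ q n < 1 := by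
    filter_upwards [((tendsto_rpow_atTop (by norm_num : (0 : ℝ) < 3 / 2)).comp
      tendsto_natCast_atTop_atTop).eventually_gt_atTop a] with n hlt
    have hp : 0 < (n : ℝ) ^ ((3 : ℝ) / 2) := ha.trans hlt
    exact ⟨sub_pos.2 ((div_lt_one hp).2 hlt), sub_lt_self 1 (div_pos ha hp)⟩
  have hfactor : ∀ᶠ n in atTop,
      (1 - q n) * (∑ k ∈ Icc 1 (n - 1), q n ^ k / (1 - q n ^ k)) / harmonic (n - 1)
        * (harmonic (n - 1) / Real.log n)
      = (∫ ω, ∑ i ∈ Icc 2 n, (Z n i ω : ℝ) ∂μ) / ((n : ℝ) ^ ((3 : ℝ) / 2) * a⁻¹ * Real.log n) := by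
    filter_upwards [hq, eventually_ge_atTop 2] with n ⟨hq0, hq1⟩ hn
    have hH : (harmonic (n - 1) : ℝ) ≠ 0 := by exact_mod_cast (harmonic_pos (by omega)).ne'
    have hp : (n : ℝ) ^ ((3 : ℝ) / 2) ≠ 0 := by positivity
    rw [integral_sum_natCast_of_measure_le_eq_pow μ (Icc 2 n) (fun i _ => hmeas n i)
      (fun i _ => pow_nonneg hq0.le _) (fun i _ => pow_lt_one₀ hq0.le hq1 (by omega))
      (fun i hi => htail n (by omega) i (mem_Icc.1 hi).1 (mem_Icc.1 hi).2),
      sum_Icc_two_sub_add_one fun k => q n ^ k / (1 - q n ^ k), hq_def]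
    field_simp
    ring
  have hlim := (tendsto_one_sub_mul_sum_div_harmonic hq
    (by simpa [q] using tendsto_natCast_mul_div_rpow_three_halves a)).mul
    tendsto_harmonic_pred_div_log
  rw [one_mul] at hlim
  exact hlim.congr' hfactor
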